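/- arXiv:2411.10502 — 10 statements merged into one kernel-verified Lean document; each statement's English description precedes it below -/
import Mathlib

section
/- For every even integer n ≥ 2, v(n) = 1/2; that is, in the misère search game on the path with an even number n of vertices, the first player wins with probability exactly 1/2 under optimal play by both players. -/
/-- Optimal first-player winning probability in the misère search game `MS(P_n)`:
`v 0 = 0` and for `n ≥ 1`,
`v n = max_{1 ≤ m ≤ n} (1/n) * ((m-1) * (1 - v (m-1)) + (n-m) * (1 - v (n-m)))`. -/
noncomputable def v : ℕ → ℝ
  | 0 => 0
  | n + 1 =>
    (Finset.Icc 1 (n + 1)).attach.sup'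
      (Finset.attach_nonempty_iff.mpr ⟨1, by simp⟩)
      (fun m => (1 / ((n : ℝ) + 1)) *
        (((m.1 - 1 : ℕ) : ℝ) * (1 - v (m.1 - 1)) +
         ((n + 1 - m.1 : ℕ) : ℝ) * (1 - v (n + 1 - m.1))))
  decreasing_by
  · have hm := m.2; simp only [Finset.mem_Icc] at hm; omega
  · have hm := m.2; simp only [Finset.mem_Icc] at hm; omega

lemma v_succ (n : ℕ) : v (n+1) = (Finset.Icc 1 (n + 1)).attach.sup'
      (Finset.attach_nonempty_iff.mpr ⟨1, by simp⟩)
      (fun m => (1 / ((n : ℝ) + 1)) *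
        (((m.1 - 1 : ℕ) : ℝ) * (1 - v (m.1 - 1)) +
         ((n + 1 - m.1 : ℕ) : ℝ) * (1 - v (n + 1 - m.1)))) := by
  rw [v]

lemma v_ge (n m : ℕ) (h1 : 1 ≤ m) (h2 : m ≤ n + 1) :
    (1 / ((n : ℝ) + 1)) * (((m - 1 : ℕ) : ℝ) * (1 - v (m - 1)) +
      ((n + 1 - m : ℕ) : ℝ) * (1 - v (n + 1 - m))) ≤ v (n + 1) := by
  rw [v_succ]
  exact Finset.le_sup' (fun m => (1 / ((n : ℝ) + 1)) *
        (((m.1 - 1 : ℕ) : ℝ) * (1 - v (m.1 - 1)) +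
         ((n + 1 - m.1 : ℕ) : ℝ) * (1 - v (n + 1 - m.1))))
    (Finset.mem_attach _ ⟨m, Finset.mem_Icc.mpr ⟨h1, h2⟩⟩)

lemma v_le (n : ℕ) {c : ℝ}
    (h : ∀ m, 1 ≤ m → m ≤ n + 1 →
      ((m - 1 : ℕ) : ℝ) * (1 - v (m - 1)) + ((n + 1 - m : ℕ) : ℝ) * (1 - v (n + 1 - m)) ≤ c) :
    v (n + 1) ≤ (1 / ((n : ℝ) + 1)) * c := by
  rw [v_succ]
  apply Finset.sup'_le
  intro m _
  have hm := m.2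
  simp only [Finset.mem_Icc] at hm
  have := h m.1 hm.1 hm.2
  have hpos : (0:ℝ) < 1 / ((n : ℝ) + 1) := by positivity
  exact mul_le_mul_of_nonneg_left this hpos.le

lemma v_one : v 1 = 0 := by
  have h1 := v_ge 0 1 le_rfl le_rfl
  have h2 := v_le 0 (c := 0) (by intro m hm1 hm2; interval_cases m; norm_num)
  norm_num at h1 h2
  linarith

lemma key : ∀ N : ℕ, ((Even N ∧ 2 ≤ N) → v N = 1/2) ∧ (N:ℝ) * (1 - v N) ≤ ((N:ℝ)+1)/2 := by
  intro N
  induction N using Nat.strong_induction_on with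
  | _ N IH =>
  match N with
  | 0 => constructor
         · rintro ⟨-, h⟩; omega
         · norm_num [v]
  | (n+1) =>
    -- general bound from IH
    have hfb : ∀ k, k ≤ n → (k:ℝ) * (1 - v k) ≤ ((k:ℝ)+1)/2 := fun k hk =>
      (IH k (by omega)).2
    -- bound for even k from IH
    have hfe : ∀ k, k ≤ n → Even k → (k:ℝ) * (1 - v k) ≤ (k:ℝ)/2 := by
      intro k hk hke
      rcases Nat.eq_zero_or_pos k with h0 | h0
      · subst h0; norm_num [v]
      · have hk2 : 2 ≤ k := by rcases hke with ⟨r, rfl⟩; omega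
        have := (IH k (by omega)).1 ⟨hke, hk2⟩
        rw [this]; ring_nf; rfl
    rcases Nat.even_or_odd (n+1) with heN | hoN
    · -- N = n+1 even
      have hn1 : n % 2 = 1 := by
        rw [Nat.even_add_one, Nat.not_even_iff] at heN; exact heN
      have hNpos : (0:ℝ) < (n:ℝ) + 1 := by positivity
      have hupper : v (n+1) ≤ 1/2 := by
        have := v_le n (c := ((n:ℝ)+1)/2) ?_
        · calc v (n+1) ≤ (1 / ((n:ℝ)+1)) * (((n:ℝ)+1)/2) := this
            _ = 1/2 := by field_simp
        · intro m h1 h2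
          set a := m - 1 with ha
          set b := n + 1 - m with hb
          have hab : a + b = n := by omega
          have habR : (a:ℝ) + (b:ℝ) = (n:ℝ) := by exact_mod_cast congrArg Nat.cast hab
          rcases Nat.even_or_odd a with hea | hoa
          · have h1' := hfe a (by omega) hea
            have h2' := hfb b (by omega)
            linarith
          · have heb : Even b := by
              rw [Nat.even_iff]; rw [Nat.odd_iff] at hoa; omega
            have h1' := hfb a (by omega)
            have h2' := hfe b (by omega) heb
            linarith
      have hlower : 1/2 ≤ v (n+1) := by
        have h2n : 2 ≤ n + 1 := by omega
        have := v_ge n 2 (by omega) h2n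
        have hv1 : v (2 - 1) = 0 := v_one
        have hk : n + 1 - 2 = n - 1 := by omega
        have hvk : ((n - 1 : ℕ):ℝ) * (1 - v (n - 1)) = ((n-1:ℕ):ℝ)/2 := by
          rcases Nat.eq_zero_or_pos (n - 1) with h0 | h0
          · rw [h0]; norm_num
          · have he' : Even (n - 1) := by rw [Nat.even_iff]; omega
            have h2' : 2 ≤ n - 1 := by rcases he' with ⟨r, hr⟩; omega
            have := (IH (n-1) (by omega)).1 ⟨he', h2'⟩
            rw [this]; ring
        rw [hk, hv1, hvk] at this
        have hcast : ((n-1:ℕ):ℝ) = (n:ℝ) - 1 := by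
          have : 1 ≤ n := by omega
          push_cast [this]; ring
        rw [hcast] at this
        calc (1:ℝ)/2 = (1 / ((n:ℝ)+1)) * (((2:ℕ)-1:ℕ) * (1 - 0) + ((n:ℝ)-1)/2) := by
              norm_num; field_simp; ring
          _ ≤ v (n+1) := this
      have hv : v (n+1) = 1/2 := le_antisymm hupper hlower
      refine ⟨fun _ => hv, ?_⟩
      rw [hv]
      push_cast
      linarith
    · -- N = n+1 odd
      have hvlow : ((n:ℝ)/2) * (1 / ((n:ℝ)+1)) ≤ v (n+1) := by
        have := v_ge n 1 le_rfl (by omega)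
        simp only [Nat.sub_self] at this
        norm_num at this
        rcases Nat.eq_zero_or_pos n with h0 | h0
        · subst h0; norm_num
          have : (0:ℝ) ≤ v 1 := by rw [v_one]
          linarith [v_one]
        · have hen : Even n := by
            rw [Nat.odd_iff] at hoN; rw [Nat.even_iff]; omega
          have h2n : 2 ≤ n := by rcases hen with ⟨r, hr⟩; omega
          have hvn : v n = 1/2 := (IH n (by omega)).1 ⟨hen, h2n⟩
          rw [hvn] at this
          calc ((n:ℝ)/2) * (1 / ((n:ℝ)+1)) = ((n:ℝ)+1)⁻¹ * ((n:ℝ) * (1 - 1/2)) := by ring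
            _ ≤ v (n+1) := this
      constructor
      · rintro ⟨he, -⟩
        exact absurd he (by rwa [← Nat.not_even_iff_odd] at hoN)
      · have hNpos : (0:ℝ) < (n:ℝ) + 1 := by positivity
        push_cast
        have : ((n:ℝ)+1) * (((n:ℝ)/2) * (1 / ((n:ℝ)+1))) = (n:ℝ)/2 := by field_simp
        nlinarith [hvlow, hNpos]

/-- In the misère search game on a path with an even number `n ≥ 2` of vertices,
the first player wins with probability exactly `1/2` under optimal play. -/
theorem misere_path_even (n : ℕ) (hn : 2 ≤ n) (he : Even n) : v n = 1 / 2 := by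
  exact (key n).1 ⟨he, hn⟩
end

section
/- For every integer k ≥ 0, v(4k+1) = 2k/(4k+1); that is, in the misère search game on the path with n = 4k+1 vertices, the first player wins with probability 2k/(4k+1) under optimal play by both players. -/
def w (j : ℕ) : ℕ := if j % 4 = 1 then (j+1)/2 else j/2

lemma key_s1 (a b : ℕ) : w a + w b + w (a+b+1) ≤ a + b + 1 := by
  unfold w; split_ifs <;> omega

lemma attain (n : ℕ) : ∃ m, 1 ≤ m ∧ m ≤ n+1 ∧ w (m-1) + w (n+1-m) + w (n+1) = n+1 := by
  by_cases h1 : (n+1) % 4 = 1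
  · exact ⟨1, le_refl _, by omega, by unfold w; split_ifs <;> omega⟩
  by_cases h2 : (n+1) % 2 = 0
  · exact ⟨n, by omega, by omega, by unfold w; split_ifs <;> omega⟩
  · exact ⟨2, by omega, by omega, by unfold w; split_ifs <;> omega⟩

lemma v_eq (n : ℕ) : v n = ((n:ℝ) - w n) / n := by
  induction n using Nat.strong_induction_on with
  | _ n ih =>
    match n with
    | 0 => simp [v, w]
    | n+1 =>
      have hN : (0:ℝ) < (n:ℝ) + 1 := by positivity
      have hterm : ∀ j, j < n+1 → ((j:ℕ):ℝ) * (1 - v j) = (w j : ℝ) := by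
        intro j hj
        rw [ih j hj]
        rcases Nat.eq_zero_or_pos j with h | h
        · simp [h, w]
        · have hj0 : (j:ℝ) ≠ 0 := by positivity
          field_simp
          ring
      rw [v]
      apply le_antisymm
      · apply Finset.sup'_le
        intro m _
        have hm := m.2
        simp only [Finset.mem_Icc] at hm
        rw [hterm (m.1-1) (by omega), hterm (n+1-m.1) (by omega)]
        have hk := key_s1 (m.1-1) (n+1-m.1)
        have he : (m.1-1) + (n+1-m.1) + 1 = n+1 := by omega
        rw [he] at hk
        have hk' : (w (m.1-1) : ℝ) + w (n+1-m.1) + w (n+1) ≤ (n:ℝ)+1 := by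
          exact_mod_cast hk
        push_cast
        rw [le_div_iff₀ hN]
        have hne : ((n:ℝ)+1) ≠ 0 := hN.ne'
        field_simp
        linarith
      · obtain ⟨m, hm1, hm2, he⟩ := attain n
        have hmem : m ∈ Finset.Icc 1 (n+1) := Finset.mem_Icc.mpr ⟨hm1, hm2⟩
        refine le_trans ?_ (Finset.le_sup' _ (Finset.mem_attach _ ⟨m, hmem⟩))
        rw [hterm (m-1) (by omega), hterm (n+1-m) (by omega)]
        have he' : (w (m-1) : ℝ) + w (n+1-m) + w (n+1) = (n:ℝ)+1 := by
          exact_mod_cast congrArg (Nat.cast : ℕ → ℝ) he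
        push_cast
        rw [div_le_iff₀ hN]
        have hne : ((n:ℝ)+1) ≠ 0 := hN.ne'
        field_simp
        linarith

/-- In the misère search game on a path with `n = 4k+1` vertices, the first player
wins with probability `2k/(4k+1)` under optimal play. -/
theorem misere_path_4k1 (k : ℕ) :
    v (4 * k + 1) = (2 * (k : ℝ)) / (4 * (k : ℝ) + 1) := by
  rw [v_eq]
  have hw : w (4*k+1) = 2*k+1 := by unfold w; split_ifs <;> omega
  rw [hw]
  push_cast
  congr 1 <;> ring
end

section
/- For every integer k ≥ 0, v(4k+3) = (2k+2)/(4k+3); that is, in the misère search game on the path with n = 4k+3 vertices, the first player wins with probability (2k+2)/(4k+3) under optimal play by both players. -/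
/-!
Write `v n = wins n / n`, so that the integer `wins n` counts the mine positions from which the
first player wins, and let `losses j = j - wins j`. Guessing `m` either hits the mine or hands the
opponent a path of `m - 1` or `n - m` vertices, so
`wins n = max_m (losses (m - 1) + losses (n - m))`.
The closed form `wins n = ⌊n / 2⌋ + [n ≡ 3 mod 4]` satisfies this recursion by a case analysis
modulo 4, the maximum being attained by guessing the second vertex.
-/

namespace MiserePath

open Finset

noncomputable def payoff (n m : ℕ) : ℝ :=
  (1 / (n : ℝ)) *
    (((m - 1 : ℕ) : ℝ) * (1 - v (m - 1)) + ((n - m : ℕ) : ℝ) * (1 - v (n - m)))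

lemma v_succ (n : ℕ) :
    v (n + 1) = (Icc 1 (n + 1)).sup' (nonempty_Icc.2 (by omega)) (payoff (n + 1)) := by
  rw [v]
  apply le_antisymm
  · exact sup'_le _ _ fun m _ => le_sup'_of_le (payoff (n + 1)) m.2 (by simp [payoff])
  · exact sup'_le _ _ fun m hm => le_sup'_of_le _ (mem_attach _ ⟨m, hm⟩) (by simp [payoff])

def wins (n : ℕ) : ℕ := n / 2 + if n % 4 = 3 then 1 else 0

def losses (n : ℕ) : ℕ := n - wins n

lemma wins_le (n : ℕ) : wins n ≤ n := by
  unfold wins; split_ifs <;> omega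

lemma losses_add_losses_le (a b : ℕ) : losses a + losses b ≤ wins (a + b + 1) := by
  unfold losses wins; split_ifs <;> omega

lemma exists_losses_add_losses_eq (n : ℕ) :
    ∃ a b, a + b = n ∧ losses a + losses b = wins (n + 1) := by
  rcases n with _ | n
  · exact ⟨0, 0, rfl, rfl⟩
  · refine ⟨1, n, by omega, ?_⟩
    unfold losses wins; split_ifs <;> omega

lemma mul_one_sub_v_eq_losses {j : ℕ} (hj : v j = wins j / j) : j * (1 - v j) = losses j := by
  rcases Nat.eq_zero_or_pos j with rfl | hpos
  · simp [losses, wins]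
  · rw [hj, losses, Nat.cast_sub (wins_le j)]
    field_simp

lemma payoff_eq {n m : ℕ} (hm : m ∈ Icc 1 n) (hv : ∀ j < n, v j = wins j / j) :
    payoff n m = (losses (m - 1) + losses (n - m) : ℕ) / n := by
  rw [mem_Icc] at hm
  rw [payoff, mul_one_sub_v_eq_losses (hv _ (by omega)),
    mul_one_sub_v_eq_losses (hv _ (by omega))]
  push_cast
  ring

theorem v_eq_wins_div (n : ℕ) : v n = wins n / n := by
  induction n using Nat.strong_induction_on with
  | _ n ih =>
  rcases n with _ | n
  · simp [v]
  rw [v_succ]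
  apply le_antisymm
  · refine sup'_le _ _ fun m hm => ?_
    rw [payoff_eq hm ih]
    gcongr
    have := losses_add_losses_le (m - 1) (n + 1 - m)
    rw [mem_Icc] at hm
    rwa [show m - 1 + (n + 1 - m) + 1 = n + 1 by omega] at this
  · obtain ⟨a, b, rfl, hab⟩ := exists_losses_add_losses_eq n
    refine le_sup'_of_le _ (b := a + 1) (by simp) (le_of_eq ?_)
    rw [payoff_eq (by simp) ih, ← hab]
    congr 4; omega

end MiserePath

/-- In the misère search game on a path with `n = 4k+3` vertices, the first player
wins with probability `(2k+2)/(4k+3)` under optimal play. -/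
theorem misere_path_4k3 (k : ℕ) :
    v (4 * k + 3) = (2 * (k : ℝ) + 2) / (4 * (k : ℝ) + 3) := by
  have hwins : MiserePath.wins (4 * k + 3) = 2 * k + 2 := by
    unfold MiserePath.wins; split_ifs <;> omega
  rw [MiserePath.v_eq_wins_div, hwins]
  push_cast
  ring
end

section
/- Let k ≥ 1 and let k₁, k₂ ≥ 0 be integers with k₁ + k₂ = k − 1, and set n = 4k. Then any first move splitting the range into intervals of sizes 4k₁+1 and 4k₂+2 is optimal in MS(P_n): (1/n)·((4k₁+1)·(1−v(4k₁+1)) + (4k₂+2)·(1−v(4k₂+2))) = v(4k). -/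
def u (n : ℕ) : ℕ := if n % 4 = 1 then n - 1 else if n % 4 = 3 then n + 1 else n

lemma u_le (n : ℕ) : u n ≤ 2 * n := by unfold u; split_ifs <;> omega

lemma W_eq (a : ℕ) (h : v a = (u a : ℝ) / (2 * a)) :
    (a : ℝ) * (1 - v a) = ((2 * a - u a : ℕ) : ℝ) / 2 := by
  rcases Nat.eq_zero_or_pos a with rfl | ha
  · simp [u]
  · have hle := u_le a
    have ha' : (a : ℝ) ≠ 0 := by positivity
    rw [h, Nat.cast_sub hle]
    push_cast
    field_simp

lemma sum_le (a b N : ℕ) (h : a + b + 1 = N) :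
    (2 * a - u a) + (2 * b - u b) ≤ u N := by
  simp only [u]; split_ifs <;> omega

lemma my_exists_eq (N : ℕ) (hN : 1 ≤ N) :
    ∃ m, 1 ≤ m ∧ m ≤ N ∧
      (2 * (m - 1) - u (m - 1)) + (2 * (N - m) - u (N - m)) = u N := by
  have h4 : N % 4 = 0 ∨ N % 4 = 1 ∨ N % 4 = 2 ∨ N % 4 = 3 := by omega
  rcases h4 with h | h | h | h
  · exact ⟨N - 1, by omega, by omega, by simp only [u]; split_ifs <;> omega⟩
  · exact ⟨1, by omega, by omega, by simp only [u]; split_ifs <;> omega⟩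
  · exact ⟨N - 1, by omega, by omega, by simp only [u]; split_ifs <;> omega⟩
  · exact ⟨2, by omega, by omega, by simp only [u]; split_ifs <;> omega⟩

lemma v_eq_s3 : ∀ n, v n = (u n : ℝ) / (2 * n) := by
  intro n
  induction n using Nat.strong_induction_on with
  | _ n IH =>
    match n with
    | 0 => simp [v, u]
    | Nat.succ n =>
      rw [v]
      have hNpos : (0 : ℝ) < (n : ℝ) + 1 := by positivity
      have key : ∀ m : {x // x ∈ Finset.Icc 1 (n + 1)},
          (1 / ((n : ℝ) + 1)) *
            (((m.1 - 1 : ℕ) : ℝ) * (1 - v (m.1 - 1)) +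
             ((n + 1 - m.1 : ℕ) : ℝ) * (1 - v (n + 1 - m.1))) =
          (((2 * (m.1 - 1) - u (m.1 - 1)) + (2 * (n + 1 - m.1) - u (n + 1 - m.1)) : ℕ) : ℝ)
            / (2 * ((n : ℝ) + 1)) := by
        intro m
        have hm := m.2; rw [Finset.mem_Icc] at hm
        have h1 := W_eq (m.1 - 1) (IH _ (by omega))
        have h2 := W_eq (n + 1 - m.1) (IH _ (by omega))
        rw [h1, h2, Nat.cast_add]
        field_simp
      apply le_antisymm
      · apply Finset.sup'_le
        intro m _
        rw [key m]
        have hm := m.2; rw [Finset.mem_Icc] at hm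
        have hle := sum_le (m.1 - 1) (n + 1 - m.1) (n + 1) (by omega)
        have hle' : (((2 * (m.1 - 1) - u (m.1 - 1)) + (2 * (n + 1 - m.1) - u (n + 1 - m.1)) : ℕ) : ℝ)
            ≤ ((u (n + 1) : ℕ) : ℝ) := by exact_mod_cast hle
        have : ((n + 1 : ℕ) : ℝ) = (n : ℝ) + 1 := by push_cast; ring
        rw [this]
        gcongr
      · obtain ⟨m₀, hm1, hm2, heq⟩ := my_exists_eq (n + 1) (by omega)
        have hmem : m₀ ∈ Finset.Icc 1 (n + 1) := Finset.mem_Icc.mpr ⟨hm1, hm2⟩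
        refine le_trans ?_ (Finset.le_sup' _ (Finset.mem_attach _ ⟨m₀, hmem⟩))
        rw [key ⟨m₀, hmem⟩]
        simp only
        rw [heq]
        have : ((n + 1 : ℕ) : ℝ) = (n : ℝ) + 1 := by push_cast; ring
        rw [this]

/-- For `n = 4k` (`k ≥ 1`), any first move splitting the range into intervals of
sizes `4k₁+1` and `4k₂+2` with `k₁ + k₂ = k - 1` is optimal in `MS(P_n)`. -/
theorem misere_path_optimal_move_4k (k k₁ k₂ : ℕ) (hk : 1 ≤ k)
    (hsum : k₁ + k₂ = k - 1) :
    (1 / ((4 * k : ℕ) : ℝ)) *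
      (((4 * k₁ + 1 : ℕ) : ℝ) * (1 - v (4 * k₁ + 1)) +
       ((4 * k₂ + 2 : ℕ) : ℝ) * (1 - v (4 * k₂ + 2))) = v (4 * k) := by
  have hk' : k = k₁ + k₂ + 1 := by omega
  subst hk'
  rw [v_eq_s3, v_eq_s3, v_eq_s3]
  have h1 : u (4 * k₁ + 1) = 4 * k₁ := by simp only [u]; split_ifs <;> omega
  have h2 : u (4 * k₂ + 2) = 4 * k₂ + 2 := by simp only [u]; split_ifs <;> omega
  have h3 : u (4 * (k₁ + k₂ + 1)) = 4 * (k₁ + k₂ + 1) := by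
    simp only [u]; split_ifs <;> omega
  rw [h1, h2, h3]
  have e1 : ((4 * k₁ + 1 : ℕ) : ℝ) > 0 := by positivity
  have e2 : ((4 * k₂ + 2 : ℕ) : ℝ) > 0 := by positivity
  have e3 : ((4 * (k₁ + k₂ + 1) : ℕ) : ℝ) > 0 := by positivity
  push_cast
  field_simp
  ring
end

section
/- Let k ≥ 0 and set n = 4k+1. Then every first move in MS(P_n) is optimal: for every integer m with 1 ≤ m ≤ n, (1/n)·((m−1)·(1−v(m−1)) + (n−m)·(1−v(n−m))) = v(4k+1). -/
def lossCount (n : ℕ) : ℕ := n / 4 + (n + 3) / 4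

lemma lossCount_add_add_le {a b n : ℕ} (h : a + b + 1 = n) :
    lossCount a + lossCount b + lossCount n ≤ n := by
  unfold lossCount; omega

lemma exists_lossCount_add_add_eq (n : ℕ) :
    ∃ a b, a + b = n ∧ lossCount a + lossCount b + lossCount (n + 1) = n + 1 := by
  rcases n with _ | n
  · exact ⟨0, 0, rfl, rfl⟩
  · refine ⟨1, n, by omega, ?_⟩
    unfold lossCount
    omega

lemma lossCount_add_of_add_eq_four_mul {a b k : ℕ} (h : a + b = 4 * k) :
    lossCount a + lossCount b = 2 * k := by
  unfold lossCount; omega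

lemma lossCount_four_mul_add_one (k : ℕ) : lossCount (4 * k + 1) = 2 * k + 1 := by
  unfold lossCount; omega

theorem natCast_mul_one_sub_v (n : ℕ) : (n : ℝ) * (1 - v n) = lossCount n := by
  induction n using Nat.strong_induction_on with
  | _ n ih =>
  cases n with
  | zero => simp [v, lossCount]
  | succ n =>
    have hv : v (n + 1) = ((n : ℝ) + 1 - lossCount (n + 1)) / (n + 1) := by
      rw [v]
      apply le_antisymm
      · refine Finset.sup'_le _ _ fun m _ => ?_
        obtain ⟨m, hm⟩ := m
        dsimp only
        rw [Finset.mem_Icc] at hm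
        have hle := lossCount_add_add_le (show m - 1 + (n + 1 - m) + 1 = n + 1 by omega)
        rw [ih _ (by omega), ih _ (by omega), one_div_mul_eq_div]
        gcongr
        rw [le_sub_iff_add_le]
        exact_mod_cast hle
      · obtain ⟨a, b, rfl, hopt⟩ := exists_lossCount_add_add_eq n
        have hmem : a + 1 ∈ Finset.Icc 1 (a + b + 1) := by simp
        refine Finset.le_sup'_of_le _ (Finset.mem_attach _ ⟨a + 1, hmem⟩) (le_of_eq ?_)
        simp only [add_tsub_cancel_right, show a + b + 1 - (a + 1) = b by omega]
        have hcount : (lossCount a + lossCount b + lossCount (a + b + 1) : ℝ) = a + b + 1 := by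
          exact_mod_cast hopt
        rw [ih a (by omega), ih b (by omega), one_div_mul_eq_div]
        push_cast
        congr 1
        linarith
    rw [hv]
    field_simp
    push_cast
    ring

/-- For `n = 4k+1`, every first move `m` with `1 ≤ m ≤ n` is optimal in `MS(P_n)`. -/
theorem misere_path_optimal_move_4k1 (k m : ℕ) (hm1 : 1 ≤ m) (hm2 : m ≤ 4 * k + 1) :
    (1 / ((4 * k + 1 : ℕ) : ℝ)) *
      (((m - 1 : ℕ) : ℝ) * (1 - v (m - 1)) +
       ((4 * k + 1 - m : ℕ) : ℝ) * (1 - v (4 * k + 1 - m))) = v (4 * k + 1) := by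
  have hsplit := lossCount_add_of_add_eq_four_mul (show m - 1 + (4 * k + 1 - m) = 4 * k by omega)
  have hn := natCast_mul_one_sub_v (4 * k + 1)
  rw [lossCount_four_mul_add_one] at hn
  rw [natCast_mul_one_sub_v, natCast_mul_one_sub_v, ← Nat.cast_add, hsplit]
  push_cast at hn ⊢
  field_simp
  linarith
end

section
/- Let k ≥ 0 and let k₁, k₂ ≥ 0 be integers with k₁ + k₂ = k, and set n = 4k+2. Then any first move splitting the range into intervals of sizes 4k₁+1 and 4k₂ is optimal in MS(P_n): (1/n)·((4k₁+1)·(1−v(4k₁+1)) + 4k₂·(1−v(4k₂))) = v(4k+2). -/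
noncomputable def ee (a : ℕ) : ℝ := if a % 4 = 1 then 1 else if a % 4 = 3 then -1 else 0

noncomputable def M (n : ℕ) : ℝ := if n % 4 = 3 then 2 else if n % 4 = 1 then 0 else 1

noncomputable def V (n : ℕ) : ℝ := if n = 0 then 0 else ((n : ℝ) - 1 + M n) / (2 * n)

lemma g_formula (a : ℕ) : (a : ℝ) * (1 - V a) = ((a : ℝ) + ee a) / 2 := by
  rcases Nat.eq_zero_or_pos a with h0 | h0
  · subst h0; simp [V, ee]
  have hne : (a : ℝ) ≠ 0 := Nat.cast_ne_zero.mpr (by omega)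
  unfold V ee M
  split_ifs <;> first
    | (exfalso; omega)
    | (field_simp; ring)

lemma ee_sum_le (a b n : ℕ) (h : a + b = n) : ee a + ee b ≤ M (n + 1) := by
  unfold ee M
  split_ifs <;> (try norm_num) <;> omega

lemma v_eq_s5 (n : ℕ) : v n = V n := by
  induction n using Nat.strong_induction_on with
  | _ n ih =>
    match n with
    | 0 => simp [v, V]
    | n + 1 =>
      have hne : ((n : ℝ) + 1) ≠ 0 := by positivity
      have key : ∀ x : ℕ, 1 ≤ x → x ≤ n + 1 →
          (1 / ((n : ℝ) + 1)) * (((x - 1 : ℕ) : ℝ) * (1 - v (x - 1)) +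
            ((n + 1 - x : ℕ) : ℝ) * (1 - v (n + 1 - x)))
          = ((n : ℝ) + ee (x - 1) + ee (n + 1 - x)) / (2 * ((n : ℝ) + 1)) := by
        intro x h1 h2
        rw [ih (x - 1) (by omega), ih (n + 1 - x) (by omega), g_formula, g_formula]
        have e1 : ((x - 1 : ℕ) : ℝ) = (x : ℝ) - 1 := by
          push_cast [Nat.cast_sub h1]; ring
        have e2 : ((n + 1 - x : ℕ) : ℝ) = (n : ℝ) + 1 - x := by
          push_cast [Nat.cast_sub (by omega : x ≤ n + 1)]; ring
        rw [e1, e2]; field_simp; ring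
      have hV : V (n + 1) = ((n : ℝ) + M (n + 1)) / (2 * ((n : ℝ) + 1)) := by
        unfold V
        rw [if_neg (by omega)]
        push_cast; ring_nf
      rw [v, hV]
      apply le_antisymm
      · apply Finset.sup'_le
        intro x _
        obtain ⟨hx1, hx2⟩ := Finset.mem_Icc.mp x.2
        rw [key x.1 hx1 hx2]
        have hee := ee_sum_le (x.1 - 1) (n + 1 - x.1) n (by omega)
        apply div_le_div_of_nonneg_right ?_ (by positivity) |>.trans_eq rfl
        · linarith
      · -- witness
        rcases (by omega : (n + 1) % 4 = 1 ∨ (n + 1) % 4 ≠ 1) with hmod | hmod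
        · -- x = 1
          have hmem : (1 : ℕ) ∈ Finset.Icc 1 (n + 1) := Finset.mem_Icc.mpr ⟨le_refl _, by omega⟩
          have hle := Finset.le_sup' (fun m : {x // x ∈ Finset.Icc 1 (n + 1)} =>
            (1 / ((n : ℝ) + 1)) * (((m.1 - 1 : ℕ) : ℝ) * (1 - v (m.1 - 1)) +
              ((n + 1 - m.1 : ℕ) : ℝ) * (1 - v (n + 1 - m.1))))
            (Finset.mem_attach _ ⟨1, hmem⟩)
          refine le_trans (le_of_eq ?_) hle
          rw [key 1 (le_refl _) (by omega)]
          have h1 : ee (1 - 1) = 0 := by unfold ee; norm_num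
          have h2 : ee (n + 1 - 1) = 0 := by unfold ee; rw [if_neg (by omega), if_neg (by omega)]
          have hM : M (n + 1) = 0 := by unfold M; rw [if_neg (by omega), if_pos hmod]
          rw [h1, h2, hM]; ring
        · -- x = 2 ; note n + 1 ≥ 2 here since (n+1) % 4 ≠ 1 and n+1 ≥ 1
          have hn2 : 2 ≤ n + 1 := by omega
          have hmem : (2 : ℕ) ∈ Finset.Icc 1 (n + 1) := Finset.mem_Icc.mpr ⟨by omega, hn2⟩
          have hle := Finset.le_sup' (fun m : {x // x ∈ Finset.Icc 1 (n + 1)} =>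
            (1 / ((n : ℝ) + 1)) * (((m.1 - 1 : ℕ) : ℝ) * (1 - v (m.1 - 1)) +
              ((n + 1 - m.1 : ℕ) : ℝ) * (1 - v (n + 1 - m.1))))
            (Finset.mem_attach _ ⟨2, hmem⟩)
          refine le_trans (le_of_eq ?_) hle
          rw [key 2 (by omega) hn2]
          have h1 : ee (2 - 1) = 1 := by unfold ee; norm_num
          have heq : ee (n + 1 - 2) + 1 = M (n + 1) := by
            unfold ee M
            split_ifs <;> (try norm_num) <;> omega
          rw [h1, ← heq]; ring

/-- For `n = 4k+2`, any first move splitting the range into intervals of sizes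
`4k₁+1` and `4k₂` with `k₁ + k₂ = k` is optimal in `MS(P_n)`. -/
theorem misere_path_optimal_move_4k2 (k k₁ k₂ : ℕ) (hsum : k₁ + k₂ = k) :
    (1 / ((4 * k + 2 : ℕ) : ℝ)) *
      (((4 * k₁ + 1 : ℕ) : ℝ) * (1 - v (4 * k₁ + 1)) +
       ((4 * k₂ : ℕ) : ℝ) * (1 - v (4 * k₂))) = v (4 * k + 2) := by
  rw [v_eq_s5 (4 * k₁ + 1), v_eq_s5 (4 * k₂), v_eq_s5 (4 * k + 2), g_formula, g_formula]
  have h1 : ee (4 * k₁ + 1) = 1 := by unfold ee; rw [if_pos (by omega)]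
  have h2 : ee (4 * k₂) = 0 := by unfold ee; rw [if_neg (by omega), if_neg (by omega)]
  have h3 : V (4 * k + 2) = 1 / 2 := by
    unfold V M
    rw [if_neg (by omega), if_neg (by omega), if_neg (by omega)]
    have : ((4 * k + 2 : ℕ) : ℝ) ≠ 0 := Nat.cast_ne_zero.mpr (by omega)
    field_simp
    ring
  rw [h1, h2, h3]
  have hne : ((4 * k + 2 : ℕ) : ℝ) ≠ 0 := Nat.cast_ne_zero.mpr (by omega)
  subst hsum
  field_simp
  push_cast
  ring
end

section
/- Let k ≥ 0 and let k₁, k₂ ≥ 0 be integers with k₁ + k₂ = k, and set n = 4k+3. Then any first move splitting the range into intervals of sizes 4k₁+1 and 4k₂+1 is optimal in MS(P_n): (1/n)·((4k₁+1)·(1−v(4k₁+1)) + (4k₂+1)·(1−v(4k₂+1))) = v(4k+3). -/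
/-- Closed form for `v`. -/
noncomputable def f (n : ℕ) : ℝ :=
  if n = 0 then 0
  else if n % 2 = 0 then 1/2
  else if n % 4 = 1 then ((n : ℝ) - 1) / (2 * n)
  else ((n : ℝ) + 1) / (2 * n)

lemma f_even (t : ℕ) (ht : t ≠ 0) : f (2*t) = 1/2 := by
  unfold f
  have h1 : 2*t ≠ 0 := by omega
  have h2 : (2*t) % 2 = 0 := by omega
  simp [h1, h2]

lemma f_4_1 (j : ℕ) : f (4*j+1) = (2*(j:ℝ))/(4*j+1) := by
  unfold f
  have h1 : 4*j+1 ≠ 0 := by omega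
  have h3 : (4*j+1) % 4 = 1 := by omega
  have : ((4*j+1 : ℕ) : ℝ) = 4*(j:ℝ)+1 := by push_cast; ring
  rw [if_neg h1, if_neg (by omega : ¬ (4*j+1) % 2 = 0), if_pos h3, this]
  have hne : (4*(j:ℝ)+1) ≠ 0 := by positivity
  field_simp
  ring

lemma f_4_3 (j : ℕ) : f (4*j+3) = (2*(j:ℝ)+2)/(4*j+3) := by
  unfold f
  have h1 : 4*j+3 ≠ 0 := by omega
  have : ((4*j+3 : ℕ) : ℝ) = 4*(j:ℝ)+3 := by push_cast; ring
  rw [if_neg h1, if_neg (by omega : ¬ (4*j+3) % 2 = 0),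
    if_neg (by omega : ¬ (4*j+3) % 4 = 1), this]
  have hne : (4*(j:ℝ)+3) ≠ 0 := by positivity
  field_simp
  ring

lemma H_even (t : ℕ) : ((2*t : ℕ) : ℝ) * (1 - f (2*t)) = t := by
  rcases Nat.eq_zero_or_pos t with h | h
  · subst h; simp [f]
  · rw [f_even t (by omega)]
    push_cast
    ring

lemma H1 (j : ℕ) : ((4*j+1 : ℕ) : ℝ) * (1 - f (4*j+1)) = 2*(j:ℝ)+1 := by
  rw [f_4_1]
  have hne : (4*(j:ℝ)+1) ≠ 0 := by positivity
  push_cast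
  field_simp
  ring

lemma H3 (j : ℕ) : ((4*j+3 : ℕ) : ℝ) * (1 - f (4*j+3)) = 2*(j:ℝ)+1 := by
  rw [f_4_3]
  have hne : (4*(j:ℝ)+3) ≠ 0 := by positivity
  push_cast
  field_simp
  ring

lemma aux_odd (t i b : ℕ) (h : 2*i + b = 2*t+1) :
    ((2*i : ℕ) : ℝ) * (1 - f (2*i)) + (b : ℝ) * (1 - f b) ≤ (t:ℝ)+1 := by
  rw [H_even]
  have hb : b % 4 = 1 ∨ b % 4 = 3 := by omega
  rcases hb with hb | hb
  · obtain ⟨j, rfl⟩ : ∃ j, b = 4*j+1 := ⟨b/4, by omega⟩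
    rw [H1]
    have hr : (i:ℝ) + 2*(j:ℝ) = (t:ℝ) := by exact_mod_cast (by omega : i + 2*j = t)
    linarith
  · obtain ⟨j, rfl⟩ : ∃ j, b = 4*j+3 := ⟨b/4, by omega⟩
    rw [H3]
    have hr : (i:ℝ) + 2*(j:ℝ) + 1 = (t:ℝ) := by exact_mod_cast (by omega : i + 2*j + 1 = t)
    linarith

lemma L_odd (t : ℕ) : ∀ a b : ℕ, a + b = 2*t+1 →
    (a : ℝ) * (1 - f a) + (b : ℝ) * (1 - f b) ≤ (t:ℝ)+1 := by
  intro a b hab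
  rcases (by omega : a % 2 = 0 ∨ b % 2 = 0) with h | h
  · obtain ⟨i, rfl⟩ : ∃ i, a = 2*i := ⟨a/2, by omega⟩
    exact aux_odd t i b (by omega)
  · obtain ⟨i, rfl⟩ : ∃ i, b = 2*i := ⟨b/2, by omega⟩
    have := aux_odd t i a (by omega)
    linarith

lemma L0 (k : ℕ) : ∀ a b : ℕ, a + b = 4*k →
    (a : ℝ) * (1 - f a) + (b : ℝ) * (1 - f b) ≤ 2*(k:ℝ) := by
  intro a b hab
  rcases (by omega : (a % 2 = 0 ∧ b % 2 = 0) ∨ (a % 4 = 1 ∧ b % 4 = 3) ∨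
      (a % 4 = 3 ∧ b % 4 = 1)) with ⟨h1, h2⟩ | ⟨h1, h2⟩ | ⟨h1, h2⟩
  · obtain ⟨i, rfl⟩ : ∃ i, a = 2*i := ⟨a/2, by omega⟩
    obtain ⟨j, rfl⟩ : ∃ j, b = 2*j := ⟨b/2, by omega⟩
    rw [H_even, H_even]
    have hr : (i:ℝ) + (j:ℝ) = 2*(k:ℝ) := by exact_mod_cast (by omega : i + j = 2*k)
    linarith
  · obtain ⟨i, rfl⟩ : ∃ i, a = 4*i+1 := ⟨a/4, by omega⟩
    obtain ⟨j, rfl⟩ : ∃ j, b = 4*j+3 := ⟨b/4, by omega⟩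
    rw [H1, H3]
    have hr : (i:ℝ) + (j:ℝ) + 1 = (k:ℝ) := by exact_mod_cast (by omega : i + j + 1 = k)
    linarith
  · obtain ⟨i, rfl⟩ : ∃ i, a = 4*i+3 := ⟨a/4, by omega⟩
    obtain ⟨j, rfl⟩ : ∃ j, b = 4*j+1 := ⟨b/4, by omega⟩
    rw [H3, H1]
    have hr : (i:ℝ) + (j:ℝ) + 1 = (k:ℝ) := by exact_mod_cast (by omega : i + j + 1 = k)
    linarith

lemma L2 (k : ℕ) : ∀ a b : ℕ, a + b = 4*k+2 →
    (a : ℝ) * (1 - f a) + (b : ℝ) * (1 - f b) ≤ 2*(k:ℝ)+2 := by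
  intro a b hab
  rcases (by omega : (a % 2 = 0 ∧ b % 2 = 0) ∨ (a % 4 = 1 ∧ b % 4 = 1) ∨
      (a % 4 = 3 ∧ b % 4 = 3)) with ⟨h1, h2⟩ | ⟨h1, h2⟩ | ⟨h1, h2⟩
  · obtain ⟨i, rfl⟩ : ∃ i, a = 2*i := ⟨a/2, by omega⟩
    obtain ⟨j, rfl⟩ : ∃ j, b = 2*j := ⟨b/2, by omega⟩
    rw [H_even, H_even]
    have hr : (i:ℝ) + (j:ℝ) = 2*(k:ℝ)+1 := by exact_mod_cast (by omega : i + j = 2*k+1)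
    linarith
  · obtain ⟨i, rfl⟩ : ∃ i, a = 4*i+1 := ⟨a/4, by omega⟩
    obtain ⟨j, rfl⟩ : ∃ j, b = 4*j+1 := ⟨b/4, by omega⟩
    rw [H1, H1]
    have hr : (i:ℝ) + (j:ℝ) = (k:ℝ) := by exact_mod_cast (by omega : i + j = k)
    linarith
  · obtain ⟨i, rfl⟩ : ∃ i, a = 4*i+3 := ⟨a/4, by omega⟩
    obtain ⟨j, rfl⟩ : ∃ j, b = 4*j+3 := ⟨b/4, by omega⟩
    rw [H3, H3]
    have hr : (i:ℝ) + (j:ℝ) + 1 = (k:ℝ) := by exact_mod_cast (by omega : i + j + 1 = k)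
    linarith

lemma v_succ_eq (n : ℕ) (C : ℝ)
    (hub : ∀ a b : ℕ, a + b = n → (a:ℝ)*(1 - f a) + (b:ℝ)*(1 - f b) ≤ C)
    (hex : ∃ a b : ℕ, a + b = n ∧ (a:ℝ)*(1 - f a) + (b:ℝ)*(1 - f b) = C)
    (hv : ∀ m, m ≤ n → v m = f m) :
    v (n + 1) = C / ((n:ℝ) + 1) := by
  rw [v]
  apply le_antisymm
  · apply Finset.sup'_le
    intro m _
    have hm := m.2
    simp only [Finset.mem_Icc] at hm
    rw [hv _ (by omega), hv _ (by omega)]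
    have hC := hub (m.1 - 1) (n + 1 - m.1) (by omega)
    calc (1 / ((n:ℝ) + 1)) *
        (((m.1 - 1 : ℕ) : ℝ) * (1 - f (m.1 - 1)) +
         ((n + 1 - m.1 : ℕ) : ℝ) * (1 - f (n + 1 - m.1)))
        ≤ (1 / ((n:ℝ) + 1)) * C := by
          apply mul_le_mul_of_nonneg_left hC
          positivity
      _ = C / ((n:ℝ) + 1) := by ring
  · obtain ⟨a, b, hab, hC⟩ := hex
    have hmem : a + 1 ∈ Finset.Icc 1 (n+1) := by
      simp only [Finset.mem_Icc]; omega
    refine le_trans ?_ (Finset.le_sup' _ (Finset.mem_attach _ (⟨a+1, hmem⟩ :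
      {x // x ∈ Finset.Icc 1 (n+1)})))
    simp only
    have e1 : a + 1 - 1 = a := by omega
    have e2 : n + 1 - (a + 1) = b := by omega
    rw [e1, e2, hv a (by omega), hv b (by omega), ← hC]
    apply le_of_eq
    ring

lemma v_eq_f : ∀ n, v n = f n := by
  intro n
  induction n using Nat.strong_induction_on with
  | _ n ih =>
    match n with
    | 0 => simp [v, f]
    | n + 1 =>
      have hv : ∀ m, m ≤ n → v m = f m := fun m h => ih m (by omega)
      obtain ⟨k, hk⟩ : ∃ k, n = 4*k ∨ n = 4*k+1 ∨ n = 4*k+2 ∨ n = 4*k+3 :=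
        ⟨n/4, by omega⟩
      rcases hk with rfl | rfl | rfl | rfl
      · -- n+1 = 4k+1
        rw [v_succ_eq (4*k) (2*(k:ℝ)) (L0 k)
          ⟨0, 2*(2*k), by omega, by
            simp only [Nat.cast_zero, zero_mul, zero_add, H_even]
            push_cast; ring⟩ hv]
        rw [f_4_1]
        push_cast
        ring
      · -- n+1 = 4k+2, even
        rw [v_succ_eq (4*k+1) (2*(k:ℝ)+1)
          (by
            intro a b hab
            have := L_odd (2*k) a b (by omega)
            push_cast at this
            linarith)
          ⟨2*(2*k), 4*0+1, by omega, by rw [H_even, H1]; push_cast; ring⟩ hv]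
        rw [show 4*k+1+1 = 2*(2*k+1) by omega, f_even _ (by omega)]
        push_cast
        rw [div_eq_iff (by positivity)]
        ring
      · -- n+1 = 4k+3
        rw [v_succ_eq (4*k+2) (2*(k:ℝ)+2) (L2 k)
          ⟨4*0+1, 4*k+1, by omega, by rw [H1, H1]; push_cast; ring⟩ hv]
        rw [show 4*k+2+1 = 4*k+3 by omega, f_4_3]
        push_cast
        ring
      · -- n+1 = 4k+4, even
        rw [v_succ_eq (4*k+3) (2*(k:ℝ)+2)
          (by
            intro a b hab
            have := L_odd (2*k+1) a b (by omega)
            push_cast at this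
            linarith)
          ⟨2*(2*k+1), 4*0+1, by omega, by rw [H_even, H1]; push_cast; ring⟩ hv]
        rw [show 4*k+3+1 = 2*(2*k+2) by omega, f_even _ (by omega)]
        push_cast
        rw [div_eq_iff (by positivity)]
        ring

/-- For `n = 4k+3`, any first move splitting the range into intervals of sizes
`4k₁+1` and `4k₂+1` with `k₁ + k₂ = k` is optimal in `MS(P_n)`. -/
theorem misere_path_optimal_move_4k3 (k k₁ k₂ : ℕ) (hsum : k₁ + k₂ = k) :
    (1 / ((4 * k + 3 : ℕ) : ℝ)) *
      (((4 * k₁ + 1 : ℕ) : ℝ) * (1 - v (4 * k₁ + 1)) +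
       ((4 * k₂ + 1 : ℕ) : ℝ) * (1 - v (4 * k₂ + 1))) = v (4 * k + 3) := by
  rw [v_eq_f, v_eq_f, v_eq_f, H1, H1, f_4_3]
  subst hsum
  have h : ((4*(k₁+k₂)+3 : ℕ) : ℝ) = 4*(k₁:ℝ)+4*(k₂:ℝ)+3 := by push_cast; ring
  rw [h]
  have hne : (4*(k₁:ℝ)+4*(k₂:ℝ)+3) ≠ 0 := by positivity
  field_simp
  push_cast
  ring
end

section
/- For every integer n ≥ 3, p(n) = 2/n + (2/(n(n−2)))·s(n−3); that is, the probability that X wins MS(P_n) playing first equals 2/n + (2/(n(n−2)))·Σ_{i=1}^{n−3} i·p(i). -/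
/-- `pq n = (p n, q n)` where `p n` (resp. `q n`) is the probability that the
exploitative player X, always guessing `2` or `n-1`, wins the misère search game
`MS(P_n)` against the uniformly random player R when playing first (resp. second):
`p 0 = p 1 = 0`, `q 0 = 0`,
`q n = (1/n) * ∑_{i=1}^{n} ((i-1)·p(i-1) + (n-i)·p(n-i) + 1)/n` for `n ≥ 1`, and
`p n = 1/n + ((n-2)/n) * q (n-2)` for `n ≥ 2`. -/
noncomputable def pq : ℕ → ℝ × ℝ
  | 0 => (0, 0)
  | 1 =>
    (0,
      (1 / ((1 : ℕ) : ℝ)) * ∑ i ∈ (Finset.Icc 1 1).attach,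
        (((i.1 - 1 : ℕ) : ℝ) * (pq (i.1 - 1)).1 +
          ((1 - i.1 : ℕ) : ℝ) * (pq (1 - i.1)).1 + 1) / ((1 : ℕ) : ℝ))
  | n + 2 =>
    (1 / ((n : ℝ) + 2) + ((n : ℝ) / ((n : ℝ) + 2)) * (pq n).2,
      (1 / ((n : ℝ) + 2)) * ∑ i ∈ (Finset.Icc 1 (n + 2)).attach,
        (((i.1 - 1 : ℕ) : ℝ) * (pq (i.1 - 1)).1 +
          ((n + 2 - i.1 : ℕ) : ℝ) * (pq (n + 2 - i.1)).1 + 1) / ((n : ℝ) + 2))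
  decreasing_by
  · have hm := i.2; simp only [Finset.mem_Icc] at hm; omega
  · have hm := i.2; simp only [Finset.mem_Icc] at hm; omega
  · omega
  · have hm := i.2; simp only [Finset.mem_Icc] at hm; omega
  · have hm := i.2; simp only [Finset.mem_Icc] at hm; omega

/-- X's winning probability in `MS(P_n)` playing first. -/
noncomputable def p (n : ℕ) : ℝ := (pq n).1

/-- X's winning probability in `MS(P_n)` playing second. -/
noncomputable def q (n : ℕ) : ℝ := (pq n).2

/-- `s n = ∑_{i=1}^{n} i * p i`. -/
noncomputable def s (n : ℕ) : ℝ := ∑ i ∈ Finset.Icc 1 n, (i : ℝ) * p i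


open Finset

/-! The sums `∑ (i-1)·p(i-1)` and `∑ (n-i)·p(n-i)` in the recursion for `q n` are one sum read
in opposite directions, each equal to `s (n-1)`, so `q n = 1/n + 2·s(n-1)/n²`. Substituting this
into `p n = 1/n + ((n-2)/n)·q(n-2)` gives the formula. -/

section IntervalSums

variable {M : Type*} [AddCommMonoid M]

theorem Finset.sum_Icc_one_sub_one (f : ℕ → M) (n : ℕ) :
    ∑ i ∈ Icc 1 n, f (i - 1) = ∑ i ∈ range n, f i := by
  rw [← Ico_add_one_right_eq_Icc, sum_Ico_eq_sum_range]
  simp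

theorem Finset.sum_Icc_one_reflect (f : ℕ → M) (n : ℕ) :
    ∑ i ∈ Icc 1 n, f (n - i) = ∑ i ∈ range n, f i := by
  rw [← sum_range_reflect, ← sum_Icc_one_sub_one]
  refine sum_congr rfl fun i hi => ?_
  rw [mem_Icc] at hi
  congr 1
  omega

end IntervalSums

theorem s_eq_sum_range (n : ℕ) : s n = ∑ i ∈ range (n + 1), (i : ℝ) * p i := by
  rw [range_eq_Ico, sum_eq_sum_Ico_succ_bot (by omega : 0 < n + 1), Ico_add_one_right_eq_Icc]
  simp [s]

theorem p_add_two (n : ℕ) : p (n + 2) = 1 / ((n : ℝ) + 2) + (n / ((n : ℝ) + 2)) * q n := by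
  simp [p, q, pq]

theorem q_add_one_eq_sum (n : ℕ) :
    q (n + 1) = (∑ i ∈ Icc 1 (n + 1),
      (((i - 1 : ℕ) : ℝ) * p (i - 1) + ((n + 1 - i : ℕ) : ℝ) * p (n + 1 - i) + 1)) /
        ((n : ℝ) + 1) ^ 2 := by
  rcases n with _ | n
  · simp only [q, zero_add, pq]
    rw [sum_attach (Icc 1 1) fun i =>
      (((i - 1 : ℕ) : ℝ) * (pq (i - 1)).1 + ((1 - i : ℕ) : ℝ) * (pq (1 - i)).1 + 1) / ((1 : ℕ) : ℝ)]
    simp [p]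
  · simp only [q, p, pq]
    rw [sum_attach (Icc 1 (n + 2)) fun i => (((i - 1 : ℕ) : ℝ) * (pq (i - 1)).1 +
      ((n + 2 - i : ℕ) : ℝ) * (pq (n + 2 - i)).1 + 1) / ((n : ℝ) + 2), ← sum_div]
    push_cast
    field_simp
    ring

theorem q_add_one (n : ℕ) : q (n + 1) = 1 / ((n : ℝ) + 1) + 2 * s n / ((n : ℝ) + 1) ^ 2 := by
  rw [q_add_one_eq_sum, sum_add_distrib, sum_add_distrib,
    sum_Icc_one_sub_one (fun j => (j : ℝ) * p j),
    sum_Icc_one_reflect (fun j => (j : ℝ) * p j), ← s_eq_sum_range,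
    sum_const, Nat.card_Icc, nsmul_one]
  push_cast
  field_simp
  ring

/-- For every `n ≥ 3`, `p n = 2/n + (2/(n(n-2))) * s (n-3)`. -/
theorem p_eq_two_div_add (n : ℕ) (hn : 3 ≤ n) :
    p n = 2 / (n : ℝ) + (2 / ((n : ℝ) * ((n : ℝ) - 2))) * s (n - 3) := by
  obtain ⟨m, rfl⟩ : ∃ m, n = m + 1 + 2 := ⟨n - 3, by omega⟩
  rw [p_add_two, q_add_one, show m + 1 + 2 - 3 = m by omega]
  push_cast
  field_simp
  ring
end

section
/- (Proposition 3.1) For every integer n ≥ 3, the sequence s satisfies the recurrence s(n) = s(n−1) + (2/(n−2))·s(n−3) + 2. -/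
lemma range_sum (m : ℕ) (f : ℕ → ℝ) (h0 : f 0 = 0) :
    ∑ i ∈ Finset.range m, f i = ∑ i ∈ Finset.Icc 1 (m - 1), f i := by
  cases m with
  | zero => simp
  | succ m' =>
    rw [Finset.sum_range_succ' f m', h0, add_zero, ← Finset.Ico_add_one_right_eq_Icc,
      Finset.sum_Ico_eq_sum_range]
    simp [add_comm]

lemma sum_sub_one (m : ℕ) (f : ℕ → ℝ) (h0 : f 0 = 0) :
    ∑ i ∈ Finset.Icc 1 m, f (i - 1) = ∑ i ∈ Finset.Icc 1 (m - 1), f i := by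
  rw [← Finset.Ico_add_one_right_eq_Icc, Finset.sum_Ico_eq_sum_range]
  simp only [Nat.add_sub_cancel_left, Nat.add_sub_cancel, Nat.succ_sub_one]
  exact range_sum m f h0

lemma sum_rev (m : ℕ) (f : ℕ → ℝ) (h0 : f 0 = 0) :
    ∑ i ∈ Finset.Icc 1 m, f (m - i) = ∑ i ∈ Finset.Icc 1 (m - 1), f i := by
  rw [← Finset.Ico_add_one_right_eq_Icc, Finset.sum_Ico_eq_sum_range]
  simp only [Nat.add_sub_cancel]
  have : ∀ i ∈ Finset.range m, f (m - (1 + i)) = f (m - 1 - i) := by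
    intro i _; congr 1; omega
  rw [Finset.sum_congr rfl this, Finset.sum_range_reflect]
  exact range_sum m f h0

lemma q_eq (m : ℕ) (hm : 1 ≤ m) : q m = (2 * s (m - 1) + m) / (m ^ 2) := by
  have key : ∀ (M : ℕ) (D : ℝ),
      ∑ i ∈ (Finset.Icc 1 M).attach,
        (((i.1 - 1 : ℕ) : ℝ) * (pq (i.1 - 1)).1 +
          ((M - i.1 : ℕ) : ℝ) * (pq (M - i.1)).1 + 1) / D
        = (2 * s (M - 1) + M) / D := by
    intro M D
    rw [Finset.sum_attach (Finset.Icc 1 M)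
      (fun i => (((i - 1 : ℕ) : ℝ) * (pq (i - 1)).1 +
          ((M - i : ℕ) : ℝ) * (pq (M - i)).1 + 1) / D)]
    rw [← Finset.sum_div]
    congr 1
    rw [Finset.sum_add_distrib, Finset.sum_add_distrib]
    rw [sum_sub_one M (fun j => (j : ℝ) * (pq j).1) (by simp)]
    rw [sum_rev M (fun j => (j : ℝ) * (pq j).1) (by simp)]
    have : ∑ i ∈ Finset.Icc 1 M, (1 : ℝ) = M := by
      rw [Finset.sum_const, Nat.card_Icc]; simp
    rw [this]
    simp only [s, p]; ring
  match m, hm with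
  | 1, _ =>
    show (pq 1).2 = _
    rw [pq]
    rw [key 1 (((1:ℕ):ℝ))]
    norm_num
  | (k + 2), _ =>
    show (pq (k + 2)).2 = _
    rw [pq]
    have h2 : ((k + 2 : ℕ) : ℝ) = (k : ℝ) + 2 := by push_cast; ring
    show 1 / ((k:ℝ) + 2) * _ = _
    rw [key (k + 2) ((k:ℝ) + 2), h2]
    have hd : ((k : ℝ) + 2) ≠ 0 := by positivity
    field_simp
    try exact Or.inl trivial

/-- Proposition 3.1: for every `n ≥ 3`, `s n = s (n-1) + (2/(n-2)) * s (n-3) + 2`. -/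
theorem s_recurrence (n : ℕ) (hn : 3 ≤ n) :
    s n = s (n - 1) + (2 / ((n : ℝ) - 2)) * s (n - 3) + 2 := by
  obtain ⟨k, rfl⟩ : ∃ k, n = k + 3 := ⟨n - 3, by omega⟩
  have hsplit : s (k + 3) = s (k + 2) + ((k + 3 : ℕ) : ℝ) * p (k + 3) := by
    rw [s, s, Finset.sum_Icc_succ_top (by omega : 1 ≤ k + 3)]
  have hp : p (k + 3) = 1 / ((k : ℝ) + 3) + (((k : ℝ) + 1) / ((k : ℝ) + 3)) * q (k + 1) := by
    show (pq (k + 1 + 2)).1 = _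
    rw [pq]
    simp only [q]
    push_cast; ring
  have hq : q (k + 1) = (2 * s k + ((k : ℝ) + 1)) / (((k : ℝ) + 1) ^ 2) := by
    rw [q_eq (k + 1) (by omega)]
    push_cast; simp
  have h1 : ((k : ℝ) + 3) ≠ 0 := by positivity
  have h2 : ((k : ℝ) + 1) ≠ 0 := by positivity
  have e1 : (k + 3 : ℕ) - 1 = k + 2 := by omega
  have e2 : (k + 3 : ℕ) - 3 = k := by omega
  have hkey : ((k : ℝ) + 3) * p (k + 3) = 2 / ((k : ℝ) + 1) * s k + 2 := by
    rw [hp, hq]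
    field_simp
    ring
  rw [e1, e2, hsplit]
  push_cast
  rw [hkey, show ((k : ℝ) + 3 - 2) = (k : ℝ) + 1 from by ring]
  ring
end

section
/- (Proposition 3.2) For every real number a*, the quadratic S(n) = a*·n² + (7a* − 2)·n + (6a* − 2) is a solution of the recurrence: for every integer n ≥ 3, S(n) = S(n−1) + (2/(n−2))·S(n−3) + 2. -/
/-! The division in the recurrence is exact: `S (x - 3) = (x - 2) (a x + 3a - 2)`, while the
first difference of `S` is `S x - S (x - 1) = 2 (a x + 3a - 2) + 2`. -/

section QuadraticSolution

variable {K : Type*} [Field K] (a x : K)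

def quadraticSolution : K := a * x ^ 2 + (7 * a - 2) * x + (6 * a - 2)

theorem quadraticSolution_sub_three :
    quadraticSolution a (x - 3) = (x - 2) * (a * x + 3 * a - 2) := by
  unfold quadraticSolution; ring

theorem quadraticSolution_sub_quadraticSolution_sub_one :
    quadraticSolution a x - quadraticSolution a (x - 1) = 2 * (a * x + 3 * a - 2) + 2 := by
  unfold quadraticSolution; ring

theorem quadraticSolution_recurrence {x : K} (hx : x - 2 ≠ 0) :
    quadraticSolution a x =
      quadraticSolution a (x - 1) + 2 / (x - 2) * quadraticSolution a (x - 3) + 2 := by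
  rw [quadraticSolution_sub_three, ← mul_assoc, div_mul_cancel₀ 2 hx]
  linear_combination quadraticSolution_sub_quadraticSolution_sub_one a x

end QuadraticSolution

/-- Proposition 3.2: for every real `a*`, the quadratic
`S n = a* n² + (7a* − 2) n + (6a* − 2)` satisfies the recurrence
`S n = S (n-1) + (2/(n-2)) * S (n-3) + 2` for all `n ≥ 3`. -/
theorem quadratic_solves_recurrence (astar : ℝ) (S : ℕ → ℝ)
    (hS : ∀ n : ℕ, S n = astar * (n : ℝ) ^ 2 + (7 * astar - 2) * (n : ℝ) + (6 * astar - 2)) :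
    ∀ n : ℕ, 3 ≤ n → S n = S (n - 1) + (2 / ((n : ℝ) - 2)) * S (n - 3) + 2 := by
  intro n hn
  have hn' : (3 : ℝ) ≤ n := by exact_mod_cast hn
  simp only [hS, ← quadraticSolution.eq_def]
  rw [Nat.cast_sub (by omega), Nat.cast_sub hn, Nat.cast_one, Nat.cast_ofNat]
  exact quadraticSolution_recurrence astar (by linarith)
end
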